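/- arXiv:1011.6476 — 6 statements merged into one kernel-verified Lean document; each statement's English description precedes it below -/
import Mathlib

section
/- (Lemma 3.6 (i)) Let p > 5 be a prime and D an integer with D ≡ 0 (mod p). Then for every primitive integral binary quadratic form Q ∈ L(D) there exists Q' ∈ L_p(D) such that Q' is SL₂(ℤ)-equivalent to Q, i.e. there exists M ∈ SL₂(ℤ) with Q∘M ∈ L_p(D). -/
open Matrix Finset

abbrev SL2Z := Matrix.SpecialLinearGroup (Fin 2) ℤ

/-- `IsForm D Q` says that the triple `Q = (a, b, c)` is a primitive integral binary
quadratic form `a x² + b x y + c y²` of discriminant `b² − 4 a c = D`. -/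
def IsForm (D : ℤ) (Q : ℤ × ℤ × ℤ) : Prop :=
  Int.gcd Q.1 (Int.gcd Q.2.1 Q.2.2) = 1 ∧ Q.2.1 ^ 2 - 4 * Q.1 * Q.2.2 = D

/-- The right action of `M = (α β; γ δ) ∈ SL₂(ℤ)` on a binary quadratic form
`Q = (a, b, c)`, given by `(Q ∘ M)(x, y) = Q (α x + β y, γ x + δ y)`. -/
def actForm (M : SL2Z) (Q : ℤ × ℤ × ℤ) : ℤ × ℤ × ℤ :=
  (Q.1 * (M.1 0 0) ^ 2 + Q.2.1 * (M.1 0 0) * (M.1 1 0) + Q.2.2 * (M.1 1 0) ^ 2,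
   2 * Q.1 * (M.1 0 0) * (M.1 0 1) + Q.2.1 * ((M.1 0 0) * (M.1 1 1) + (M.1 0 1) * (M.1 1 0)) +
     2 * Q.2.2 * (M.1 1 0) * (M.1 1 1),
   Q.1 * (M.1 0 1) ^ 2 + Q.2.1 * (M.1 0 1) * (M.1 1 1) + Q.2.2 * (M.1 1 1) ^ 2)

/-- `L(D)`: the set of primitive integral binary quadratic forms of discriminant `D`. -/
def Lset (D : ℤ) : Set (ℤ × ℤ × ℤ) := {Q | IsForm D Q}

/-- `L_N(D)`: the subset of `L(D)` consisting of forms `(a, b, c)` with `N ∣ a`. -/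
def Lp (N : ℕ) (D : ℤ) : Set (ℤ × ℤ × ℤ) := {Q | IsForm D Q ∧ (N : ℤ) ∣ Q.1}

/-- `SL₂(ℤ)`-equivalence of binary quadratic forms. -/
def relSL (Q Q' : ℤ × ℤ × ℤ) : Prop := ∃ M : SL2Z, actForm M Q = Q'

/-- `Γ₀(N)`-equivalence of binary quadratic forms: equivalence under a matrix in `SL₂(ℤ)`
whose lower-left entry is divisible by `N`. -/
def relG0 (N : ℕ) (Q Q' : ℤ × ℤ × ℤ) : Prop :=
  ∃ M : SL2Z, (N : ℤ) ∣ M.1 1 0 ∧ actForm M Q = Q'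

/-- The map `[a, b, c] ↦ [a/p, b, p·c]`. -/
def pushp (p : ℕ) (Q : ℤ × ℤ × ℤ) : ℤ × ℤ × ℤ := (Q.1 / p, Q.2.1, (p : ℤ) * Q.2.2)

lemma isForm_act (D : ℤ) (M : SL2Z) (Q : ℤ × ℤ × ℤ) (h : IsForm D Q) :
    IsForm D (actForm M Q) := by
  obtain ⟨a, b, c⟩ := Q
  obtain ⟨hg, hd⟩ := h
  have hdet : M.1 0 0 * M.1 1 1 - M.1 0 1 * M.1 1 0 = 1 := by
    have := M.2
    rwa [Matrix.det_fin_two] at this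
  constructor
  · set g : ℕ := Int.gcd (actForm M (a,b,c)).1
      (Int.gcd (actForm M (a,b,c)).2.1 (actForm M (a,b,c)).2.2) with hgdef
    have h1 : (g : ℤ) ∣ (actForm M (a,b,c)).1 := Int.gcd_dvd_left _ _
    have h2 : (g : ℤ) ∣ (actForm M (a,b,c)).2.1 :=
      dvd_trans (Int.gcd_dvd_right _ _) (Int.gcd_dvd_left _ _)
    have h3 : (g : ℤ) ∣ (actForm M (a,b,c)).2.2 :=
      dvd_trans (Int.gcd_dvd_right _ _) (Int.gcd_dvd_right _ _)
    simp only [actForm] at h1 h2 h3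
    have ha : (g : ℤ) ∣ a := by
      have : a = (a * (M.1 0 0) ^ 2 + b * (M.1 0 0) * (M.1 1 0) + c * (M.1 1 0) ^ 2)
            * (M.1 1 1)^2
          - (2 * a * (M.1 0 0) * (M.1 0 1) + b * ((M.1 0 0) * (M.1 1 1) + (M.1 0 1) * (M.1 1 0))
             + 2 * c * (M.1 1 0) * (M.1 1 1)) * (M.1 1 1) * (M.1 1 0)
          + (a * (M.1 0 1) ^ 2 + b * (M.1 0 1) * (M.1 1 1) + c * (M.1 1 1) ^ 2)
            * (M.1 1 0)^2 := by
        linear_combination (-(a * (M.1 0 0 * M.1 1 1 - M.1 0 1 * M.1 1 0)) - a) * hdet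
      rw [this]
      exact dvd_add (dvd_sub (Dvd.dvd.mul_right h1 _) (Dvd.dvd.mul_right (Dvd.dvd.mul_right h2 _) _)) (Dvd.dvd.mul_right h3 _)
    have hb : (g : ℤ) ∣ b := by
      have : b = (2 * a * (M.1 0 0) * (M.1 0 1) + b * ((M.1 0 0) * (M.1 1 1) + (M.1 0 1) * (M.1 1 0))
             + 2 * c * (M.1 1 0) * (M.1 1 1)) * (M.1 0 0 * M.1 1 1 + M.1 0 1 * M.1 1 0)
          - (a * (M.1 0 0) ^ 2 + b * (M.1 0 0) * (M.1 1 0) + c * (M.1 1 0) ^ 2)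
            * (2 * M.1 0 1 * M.1 1 1)
          - (a * (M.1 0 1) ^ 2 + b * (M.1 0 1) * (M.1 1 1) + c * (M.1 1 1) ^ 2)
            * (2 * M.1 0 0 * M.1 1 0) := by
        linear_combination (-(b * (M.1 0 0 * M.1 1 1 - M.1 0 1 * M.1 1 0)) - b) * hdet
      rw [this]
      exact dvd_sub (dvd_sub (Dvd.dvd.mul_right h2 _) (Dvd.dvd.mul_right h1 _)) (Dvd.dvd.mul_right h3 _)
    have hc : (g : ℤ) ∣ c := by
      have : c = (a * (M.1 0 0) ^ 2 + b * (M.1 0 0) * (M.1 1 0) + c * (M.1 1 0) ^ 2)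
            * (M.1 0 1)^2
          - (2 * a * (M.1 0 0) * (M.1 0 1) + b * ((M.1 0 0) * (M.1 1 1) + (M.1 0 1) * (M.1 1 0))
             + 2 * c * (M.1 1 0) * (M.1 1 1)) * (M.1 0 1) * (M.1 0 0)
          + (a * (M.1 0 1) ^ 2 + b * (M.1 0 1) * (M.1 1 1) + c * (M.1 1 1) ^ 2)
            * (M.1 0 0)^2 := by
        linear_combination (-(c * (M.1 0 0 * M.1 1 1 - M.1 0 1 * M.1 1 0))- c) * hdet
      rw [this]
      exact dvd_add (dvd_sub (Dvd.dvd.mul_right h1 _) (Dvd.dvd.mul_right (Dvd.dvd.mul_right h2 _) _)) (Dvd.dvd.mul_right h3 _)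
    have : (g : ℤ) ∣ (1 : ℤ) := by
      have := Int.dvd_coe_gcd ha (Int.dvd_coe_gcd hb hc)
      rwa [hg] at this
      -- hg : gcd a (gcd b c) = 1, coercion...
    exact Nat.dvd_one.mp (Int.ofNat_dvd.mp (by exact_mod_cast this))
  · simp only [actForm]
    linear_combination ((b^2 - 4*a*c) * (M.1 0 0 * M.1 1 1 - M.1 0 1 * M.1 1 0)
      + (b^2-4*a*c)) * hdet + hd

/-- Lemma 3.6 (i): if `p ∣ D`, every form in `L(D)` is
`SL₂(ℤ)`-equivalent to a form in `L_p(D)`. -/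
theorem statement2 (p : ℕ) (hp : Nat.Prime p) (hp5 : 5 < p) (D : ℤ) (hD : (p : ℤ) ∣ D) :
    ∀ Q ∈ Lset D, ∃ M : SL2Z, actForm M Q ∈ Lp p D := by
  intro Q hQ
  obtain ⟨a, b, c⟩ := Q
  have hQ' : IsForm D (a, b, c) := hQ
  have hpZ : Prime (p : ℤ) := Int.prime_iff_natAbs_prime.mpr (by simpa using hp)
  by_cases hpa : (p : ℤ) ∣ a
  · refine ⟨1, isForm_act D 1 _ hQ', ?_⟩
    simp only [actForm, Matrix.SpecialLinearGroup.coe_one, Matrix.one_apply_eq,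
      Matrix.one_apply_ne (by decide : (0 : Fin 2) ≠ 1),
      Matrix.one_apply_ne (by decide : (1 : Fin 2) ≠ 0)]
    simpa using hpa
  · haveI : Fact (Nat.Prime p) := ⟨hp⟩
    set u : ZMod p := (-b : ZMod p) * (2 * a : ZMod p)⁻¹ with hu
    set x : ℤ := (u.val : ℤ) with hx
    have h2a : ((2 * a : ℤ) : ZMod p) ≠ 0 := by
      rw [Ne, ZMod.intCast_zmod_eq_zero_iff_dvd]
      intro hdvd
      rcases (Int.Prime.dvd_mul hp hdvd) with h | h
      · have h2 : p ∣ 2 := by simpa using h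
        have := Nat.le_of_dvd (by norm_num) h2
        omega
      · exact hpa (Int.dvd_natAbs.mp (Int.ofNat_dvd.mpr h))
    have h2a' : (2 * (a : ZMod p)) ≠ 0 := by push_cast at h2a; exact h2a
    have hxb : (p : ℤ) ∣ 2 * a * x + b := by
      have h0 : ((2 * a * x + b : ℤ) : ZMod p) = 0 := by
        push_cast [hx]
        rw [ZMod.natCast_val, ZMod.cast_id, hu]
        field_simp
        have ha0 : (a : ZMod p) ≠ 0 := right_ne_zero_of_mul h2a'
        have h20 : (2 : ZMod p) ≠ 0 := left_ne_zero_of_mul h2a'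
        rw [div_self h2a']; ring
      rwa [ZMod.intCast_zmod_eq_zero_iff_dvd] at h0
    refine ⟨⟨!![x, -1; 1, 0], by simp [Matrix.det_fin_two_of]⟩, isForm_act D _ _ hQ', ?_⟩
    have hent : (actForm ⟨!![x, -1; 1, 0], by simp [Matrix.det_fin_two_of]⟩ (a, b, c)).1
        = a * x ^ 2 + b * x * 1 + c * 1 ^ 2 := by
      simp [actForm]
    show (p : ℤ) ∣ _
    rw [hent]
    have key : 4 * a * (a * x ^ 2 + b * x * 1 + c * 1 ^ 2)
        = (2 * a * x + b) * (2 * a * x + b) - (b ^ 2 - 4 * a * c) := by ring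
    have hDdvd : (p : ℤ) ∣ b ^ 2 - 4 * a * c := hQ'.2 ▸ hD
    have h4 : (p : ℤ) ∣ 4 * a * (a * x ^ 2 + b * x * 1 + c * 1 ^ 2) := by
      rw [key]; exact dvd_sub (hxb.mul_right _) hDdvd
    have hnot4a : ¬ (p : ℤ) ∣ 4 * a := by
      intro h
      rcases hpZ.dvd_mul.mp h with h | h
      · have h' : p ∣ 4 := by
          have := Int.ofNat_dvd.mp (by exact_mod_cast h)
          exact this
        have := Nat.le_of_dvd (by norm_num) h'
        omega
      · exact hpa h
    exact (hpZ.dvd_mul.mp h4).resolve_left hnot4a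
end

section
/- (Lemma 3.6 (ii)) Let p > 5 be a prime and D an integer with D ≡ 0 (mod p²) such that the Legendre symbol (D/p² | p) equals 1. Then for every Q ∈ L_p(D) there exists a form [a,b,c] ∈ L_p(D) with a ≡ 0 (mod p³) such that Q is Γ₀(p)-equivalent to [a,b,c]. -/
open Matrix Finset

/-- Lemma 3.6 (ii): if `p² ∣ D` and `(D/p² | p) = 1`, every form in
`L_p(D)` is `Γ₀(p)`-equivalent to a form `[a,b,c] ∈ L_p(D)` with `p³ ∣ a`. -/
theorem statement3 (p : ℕ) [Fact (Nat.Prime p)] (hp5 : 5 < p) (D : ℤ)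
    (hD : (p : ℤ) ^ 2 ∣ D) (hleg : legendreSym p (D / (p : ℤ) ^ 2) = 1) :
    ∀ Q ∈ Lp p D, ∃ R ∈ Lp p D, (p : ℤ) ^ 3 ∣ R.1 ∧ relG0 p Q R := by
  have hp : p.Prime := Fact.out
  have hpZ : Prime (p : ℤ) := Int.prime_iff_natAbs_prime.mpr (by simpa using hp)
  have hpne : (p : ℤ) ≠ 0 := by exact_mod_cast hp.ne_zero
  rintro ⟨a, b, c⟩ ⟨⟨hgcd, hdisc⟩, hpa⟩
  simp only at hgcd hdisc hpa
  -- basic divisibilities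
  have hpD : (p : ℤ) ∣ D := dvd_trans (by exact ⟨p, by ring⟩) hD
  have hpb : (p : ℤ) ∣ b := by
    have h2 : (p : ℤ) ∣ b ^ 2 := by
      have : b ^ 2 = D + 4 * a * c := by linarith [hdisc]
      rw [this]
      exact dvd_add hpD (Dvd.dvd.mul_right (Dvd.dvd.mul_left hpa 4) c)
    exact hpZ.dvd_of_dvd_pow h2
  have hpc : ¬ (p : ℤ) ∣ c := by
    intro hc
    have : (p : ℤ) ∣ (Int.gcd a (Int.gcd b c) : ℤ) :=
      Int.dvd_coe_gcd hpa (Int.dvd_coe_gcd hpb hc)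
    rw [hgcd] at this
    have := Int.le_of_dvd one_pos this
    have : (1 : ℤ) < p := by exact_mod_cast hp.one_lt
    omega
  obtain ⟨b₀, hb⟩ := hpb
  obtain ⟨a₁, ha1⟩ := hpa
  have hp2a : (p : ℤ) ∣ a₁ := by
    have h4 : (p : ℤ) ∣ 4 * a₁ * c := by
      have hd : (p:ℤ) * (4 * a₁ * c) = (p:ℤ) * ((p:ℤ) * b₀ ^ 2) - D := by
        rw [← hdisc, hb, ha1]; ring
      have h2 : (p : ℤ) * (p : ℤ) ∣ (p:ℤ) * (4 * a₁ * c) := by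
        rw [hd]
        exact dvd_sub ⟨b₀ ^ 2, by ring⟩ (by rwa [sq] at hD)
      exact (mul_dvd_mul_iff_left hpne).mp h2
    rcases hpZ.dvd_mul.mp (by rwa [mul_assoc] at h4 : (p:ℤ) ∣ 4 * (a₁ * c)) with h | h
    · exfalso
      have h1 := Int.le_of_dvd (by norm_num) h
      have h2 : (5 : ℤ) < p := by exact_mod_cast hp5
      omega
    · rcases hpZ.dvd_mul.mp h with h | h
      · exact h
      · exact absurd h hpc
  obtain ⟨a₀, ha0⟩ := hp2a
  have ha : a = (p : ℤ) ^ 2 * a₀ := by rw [ha1, ha0]; ring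
  -- D / p² = b₀² - 4 a₀ c
  set d₀ : ℤ := b₀ ^ 2 - 4 * a₀ * c with hd₀
  have hDd : D = (p : ℤ) ^ 2 * d₀ := by rw [← hdisc, ha, hb, hd₀]; ring
  have hdiv : D / (p : ℤ) ^ 2 = d₀ := by
    rw [hDd]; exact Int.mul_ediv_cancel_left _ (pow_ne_zero 2 hpne)
  rw [hdiv] at hleg
  -- work in ZMod p
  have hd0ne : ((d₀ : ZMod p)) ≠ 0 := by
    intro h
    rw [(legendreSym.eq_zero_iff p d₀).mpr h] at hleg
    exact one_ne_zero hleg.symm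
  obtain ⟨y, hy⟩ := (legendreSym.eq_one_iff p hd0ne).mp hleg
  have hcne : ((c : ZMod p)) ≠ 0 := by
    rwa [Ne, ZMod.intCast_zmod_eq_zero_iff_dvd]
  have h2ne : ((2 : ZMod p)) ≠ 0 := by
    have : ((2 : ℕ) : ZMod p) ≠ 0 := by
      rw [Ne, ZMod.natCast_eq_zero_iff]
      intro h
      have := Nat.le_of_dvd (by norm_num) h
      omega
    exact_mod_cast this
  set z : ZMod p := (y - (b₀ : ZMod p)) * (2 * (c : ZMod p))⁻¹ with hz
  have h2c : (2 * (c : ZMod p)) ≠ 0 := mul_ne_zero h2ne hcne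
  have hzc : 2 * (c : ZMod p) * z = y - (b₀ : ZMod p) := by
    have : 2 * (c : ZMod p) * z = (y - (b₀ : ZMod p)) * ((2 * (c : ZMod p))⁻¹ * (2 * (c : ZMod p))) := by
      rw [hz]; ring
    rw [this, inv_mul_cancel₀ h2c, mul_one]
  have hkey : (c : ZMod p) * z ^ 2 + (b₀ : ZMod p) * z + (a₀ : ZMod p) = 0 := by
    have h4 : (4 * (c : ZMod p)) * ((c : ZMod p) * z ^ 2 + (b₀ : ZMod p) * z + (a₀ : ZMod p))
        = (2 * (c : ZMod p) * z + (b₀ : ZMod p)) ^ 2 -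
          ((b₀ : ZMod p) ^ 2 - 4 * (a₀ : ZMod p) * (c : ZMod p)) := by ring
    rw [hzc] at h4
    have hyd : (y : ZMod p) ^ 2 = ((b₀ : ZMod p) ^ 2 - 4 * (a₀ : ZMod p) * (c : ZMod p)) := by
      have : ((d₀ : ℤ) : ZMod p) = y * y := hy
      push_cast [hd₀] at this
      rw [sq]; linear_combination -this
    have h0 : (4 * (c : ZMod p)) * ((c : ZMod p) * z ^ 2 + (b₀ : ZMod p) * z + (a₀ : ZMod p)) = 0 := by
      rw [h4]
      rw [sub_add_cancel]
      rw [hyd]; ring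
    have h4c : (4 * (c : ZMod p)) ≠ 0 := by
      apply mul_ne_zero _ hcne
      have : (4 : ZMod p) = 2 * 2 := by norm_num
      rw [this]; exact mul_ne_zero h2ne h2ne
    exact (mul_eq_zero.mp h0).resolve_left h4c
  -- lift z
  set Z : ℤ := (z.val : ℤ) with hZ
  have hNZ : NeZero p := ⟨hp.ne_zero⟩
  have hZz : ((Z : ℤ) : ZMod p) = z := by
    rw [hZ]; push_cast; rw [ZMod.natCast_val, ZMod.cast_id]
  have hdvdk : (p : ℤ) ∣ c * Z ^ 2 + b₀ * Z + a₀ := by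
    rw [← ZMod.intCast_zmod_eq_zero_iff_dvd]
    push_cast
    rw [hZz, hkey]
  obtain ⟨k, hk⟩ := hdvdk
  -- the matrix
  set M : SL2Z := ⟨!![1, 0; (p : ℤ) * Z, 1], by
    simp [Matrix.det_fin_two_of]⟩ with hM
  refine ⟨(a + b * ((p:ℤ) * Z) + c * ((p:ℤ) * Z) ^ 2, b + 2 * c * ((p:ℤ) * Z), c),
    ⟨⟨?_, ?_⟩, ?_⟩, ?_, M, ?_, ?_⟩
  · -- primitivity
    simp only
    set a' : ℤ := a + b * ((p:ℤ) * Z) + c * ((p:ℤ) * Z) ^ 2 with ha'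
    set b' : ℤ := b + 2 * c * ((p:ℤ) * Z) with hb'
    set g : ℕ := Int.gcd a' (Int.gcd b' c) with hg
    have hga : (g : ℤ) ∣ a' := Int.gcd_dvd_left _ _
    have hgbc : (g : ℤ) ∣ (Int.gcd b' c : ℤ) := Int.gcd_dvd_right _ _
    have hgb : (g : ℤ) ∣ b' := hgbc.trans (Int.gcd_dvd_left _ _)
    have hgc : (g : ℤ) ∣ c := hgbc.trans (Int.gcd_dvd_right _ _)
    have hgb2 : (g : ℤ) ∣ b := by
      have : b = b' - 2 * c * ((p:ℤ) * Z) := by rw [hb']; ring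
      rw [this]; exact dvd_sub hgb (by exact Dvd.dvd.mul_right (hgc.mul_left 2) _)
    have hga2 : (g : ℤ) ∣ a := by
      have : a = a' - b * ((p:ℤ) * Z) - c * ((p:ℤ) * Z) ^ 2 := by rw [ha']; ring
      rw [this]
      exact dvd_sub (dvd_sub hga (hgb2.mul_right _)) (hgc.mul_right _)
    have : (g : ℤ) ∣ (Int.gcd a (Int.gcd b c) : ℤ) :=
      Int.dvd_coe_gcd hga2 (Int.dvd_coe_gcd hgb2 hgc)
    rw [hgcd] at this
    exact Nat.dvd_one.mp (by exact_mod_cast this)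
  · -- discriminant
    simp only
    rw [← hdisc]; ring
  · -- p ∣ a'
    simp only
    exact dvd_add (dvd_add ⟨a₁, ha1⟩ (Dvd.dvd.mul_left ⟨Z, rfl⟩ b))
      (by exact Dvd.dvd.mul_left (⟨Z * ((p:ℤ)*Z), by ring⟩) c)
  · -- p³ ∣ a'
    exact ⟨k, by rw [ha, hb]; linear_combination (p : ℤ) ^ 2 * hk⟩
  · -- lower left divisible by p
    show (p : ℤ) ∣ M.1 1 0
    rw [hM]
    simp
  · -- the action
    show actForm M (a, b, c) = _
    rw [hM]
    simp only [actForm]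
    refine Prod.ext ?_ (Prod.ext ?_ ?_) <;>
      simp [Matrix.cons_val_zero, Matrix.cons_val_one, Matrix.head_cons]
end

section
/- (Lemma 3.6 (iii)) Let p > 5 be a prime and D an integer with D ≡ 0 (mod p). Then two forms Q, Q' ∈ L_p(D) are SL₂(ℤ)-equivalent if and only if they are Γ₀(p)-equivalent. Equivalently, the map sending the Γ₀(p)-equivalence class of [a,b,c] ∈ L_p(D) to its SL₂(ℤ)-equivalence class induces a one-to-one correspondence between L_p(D)/Γ₀(p) and L_p(D)/SL₂(ℤ). -/
open Matrix Finset

lemma actForm_one (Q : ℤ × ℤ × ℤ) : actForm 1 Q = Q := by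
  simp [actForm, Matrix.SpecialLinearGroup.coe_one, Matrix.one_apply]

lemma actForm_mul (M N : SL2Z) (Q : ℤ × ℤ × ℤ) :
    actForm M (actForm N Q) = actForm (N * M) Q := by
  obtain ⟨a, b, c⟩ := Q
  simp only [actForm, Matrix.SpecialLinearGroup.coe_mul, Matrix.mul_apply, Fin.sum_univ_two,
    Prod.mk.injEq]
  refine ⟨by ring, by ring, by ring⟩

lemma relSL_equiv : Equivalence relSL := by
  constructor
  · exact fun Q => ⟨1, actForm_one Q⟩
  · rintro Q Q' ⟨M, h⟩
    refine ⟨M⁻¹, ?_⟩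
    rw [← h, actForm_mul, mul_inv_cancel, actForm_one]
  · rintro Q Q' Q'' ⟨M, h⟩ ⟨N, h'⟩
    exact ⟨M * N, by rw [← actForm_mul, h, h']⟩

lemma key (p : ℕ) (hp : Nat.Prime p) (D : ℤ) (hD : (p : ℤ) ∣ D)
    (Q Q' : ℤ × ℤ × ℤ) (hQ : Q ∈ Lp p D) (hQ' : Q' ∈ Lp p D)
    (M : SL2Z) (h : actForm M Q = Q') : (p : ℤ) ∣ M.1 1 0 := by
  obtain ⟨⟨hg, hdisc⟩, ha⟩ := hQ
  obtain ⟨⟨hg', hdisc'⟩, ha'⟩ := hQ'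
  have hpI : Prime (p : ℤ) := Int.prime_iff_natAbs_prime.mpr (by simpa using hp)
  have hb : (p : ℤ) ∣ Q.2.1 := by
    have : (p : ℤ) ∣ Q.2.1 ^ 2 := by
      have : Q.2.1 ^ 2 = D + 4 * Q.1 * Q.2.2 := by linarith
      rw [this]
      exact dvd_add hD (Dvd.dvd.mul_right (ha.mul_left 4) _)
    exact hpI.dvd_of_dvd_pow this
  have hc : ¬ (p : ℤ) ∣ Q.2.2 := by
    intro hc
    have h1 : (p : ℤ) ∣ (Int.gcd Q.2.1 Q.2.2 : ℤ) := Int.dvd_coe_gcd hb hc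
    have h2 : (p : ℤ) ∣ (Int.gcd Q.1 (Int.gcd Q.2.1 Q.2.2) : ℤ) := Int.dvd_coe_gcd ha h1
    rw [hg] at h2
    have hp1 : p ∣ 1 := by exact_mod_cast h2
    exact hp.one_lt.ne' (Nat.dvd_one.mp hp1)
  have hcg : (p : ℤ) ∣ Q.2.2 * (M.1 1 0) ^ 2 := by
    have e : Q.2.2 * (M.1 1 0) ^ 2 =
        Q'.1 - Q.1 * (M.1 0 0) ^ 2 - Q.2.1 * (M.1 0 0) * (M.1 1 0) := by
      rw [← h]; simp [actForm]; ring
    rw [e]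
    exact dvd_sub (dvd_sub ha' (ha.mul_right _)) ((hb.mul_right _).mul_right _)
  rcases hpI.dvd_mul.mp hcg with h1 | h1
  · exact absurd h1 hc
  · exact hpI.dvd_of_dvd_pow h1

/-- Lemma 3.6 (iii): for `p ∣ D`, forms in `L_p(D)` are
`SL₂(ℤ)`-equivalent iff they are `Γ₀(p)`-equivalent; equivalently, the identity
induces a bijection `L_p(D)/Γ₀(p) ≃ L_p(D)/SL₂(ℤ)`. -/
theorem statement5 (p : ℕ) (hp : Nat.Prime p) (hp5 : 5 < p) (D : ℤ) (hD : (p : ℤ) ∣ D) :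
    (∀ Q ∈ Lp p D, ∀ Q' ∈ Lp p D, (relSL Q Q' ↔ relG0 p Q Q')) ∧
    ∃ F : Quot (fun Q Q' : Lp p D => relG0 p Q.1 Q'.1) →
        Quot (fun Q Q' : Lp p D => relSL Q.1 Q'.1),
      (∀ Q : Lp p D, F (Quot.mk _ Q) = Quot.mk _ Q) ∧ Function.Bijective F := by
  have main : ∀ Q ∈ Lp p D, ∀ Q' ∈ Lp p D, (relSL Q Q' ↔ relG0 p Q Q') := by
    intro Q hQ Q' hQ'
    constructor
    · rintro ⟨M, h⟩
      exact ⟨M, key p hp D hD Q Q' hQ hQ' M h, h⟩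
    · rintro ⟨M, _, h⟩
      exact ⟨M, h⟩
  refine ⟨main, ?_⟩
  refine ⟨Quot.lift (fun Q => Quot.mk _ Q) ?_, fun Q => rfl, ?_, ?_⟩
  · intro a b hab
    exact Quot.sound (by rcases hab with ⟨M, _, h⟩; exact ⟨M, h⟩)
  · intro x y hxy
    induction x using Quot.ind with | _ a =>
    induction y using Quot.ind with | _ b =>
    simp only [Quot.lift_mk] at hxy
    have heq : Equivalence (fun Q Q' : Lp p D => relSL Q.1 Q'.1) := by
      constructor
      · exact fun Q => relSL_equiv.refl Q.1
      · exact fun h => relSL_equiv.symm h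
      · exact fun h h' => relSL_equiv.trans h h'
    have := heq.eqvGen_iff.mp (Quot.eqvGen_exact hxy)
    exact Quot.sound ((main a.1 a.2 b.1 b.2).mp this)
  · intro y
    induction y using Quot.ind with | _ a =>
    exact ⟨Quot.mk _ a, rfl⟩
end

section
/- Let p > 5 be a prime and D an integer with D ≡ 0 (mod p) and D ≢ 0 (mod p²). Then every form [a,b,c] ∈ L_p(D) satisfies p ∣ b, p ∤ c and p² ∤ a, and the form [a/p, b, pc] is a primitive integral binary quadratic form of discriminant D, i.e. [a/p, b, pc] ∈ L(D). -/
open Matrix Finset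

/-- if `p ∣ D` and `p² ∤ D`, every `[a,b,c] ∈ L_p(D)` satisfies
`p ∣ b`, `p ∤ c`, `p² ∤ a`, and `[a/p, b, pc] ∈ L(D)`. -/
theorem statement6 (p : ℕ) (hp : Nat.Prime p) (hp5 : 5 < p) (D : ℤ)
    (hD : (p : ℤ) ∣ D) (hD2 : ¬ (p : ℤ) ^ 2 ∣ D) :
    ∀ Q ∈ Lp p D, (p : ℤ) ∣ Q.2.1 ∧ ¬ (p : ℤ) ∣ Q.2.2 ∧ ¬ (p : ℤ) ^ 2 ∣ Q.1 ∧
      pushp p Q ∈ Lset D := by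
  rintro ⟨a, b, c⟩ ⟨⟨hprim, hdisc⟩, hpa⟩
  simp only at hprim hdisc hpa ⊢
  have hpZ : Prime (p : ℤ) := (Nat.prime_iff_prime_int.mp hp)
  -- p ∣ b
  have hb2 : (p : ℤ) ∣ b ^ 2 := by
    have : b ^ 2 = D + 4 * a * c := by linarith
    rw [this]
    exact dvd_add hD (Dvd.dvd.mul_right (Dvd.dvd.mul_left hpa 4) c)
  have hpb : (p : ℤ) ∣ b := hpZ.dvd_of_dvd_pow hb2
  -- p ∤ c
  have hpc : ¬ (p : ℤ) ∣ c := by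
    intro hpc
    have : (p : ℤ) ∣ (Int.gcd a (Int.gcd b c) : ℤ) :=
      Int.dvd_coe_gcd hpa (Int.dvd_coe_gcd hpb hpc)
    rw [hprim] at this
    exact hpZ.not_dvd_one (by simpa using this)
  -- p² ∤ a
  have hp2a : ¬ (p : ℤ) ^ 2 ∣ a := by
    intro h2a
    apply hD2
    have : D = b ^ 2 - 4 * a * c := hdisc.symm
    rw [this]
    have hb2' : (p : ℤ) ^ 2 ∣ b ^ 2 := pow_dvd_pow_of_dvd hpb 2
    exact dvd_sub hb2' (Dvd.dvd.mul_right (Dvd.dvd.mul_left h2a 4) c)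
  refine ⟨hpb, hpc, hp2a, ?_⟩
  obtain ⟨a', ha'⟩ := hpa
  have hpne : (p : ℤ) ≠ 0 := by exact_mod_cast hp.ne_zero
  have hdiv : a / (p : ℤ) = a' := by rw [ha']; exact Int.mul_ediv_cancel_left a' hpne
  constructor
  · -- primitivity
    simp only [pushp, hdiv]
    by_contra hg
    have hg0 : Int.gcd a' (Int.gcd b ((p : ℤ) * c)) ≠ 0 := by
      intro h0
      rw [Int.gcd_eq_zero_iff] at h0
      obtain ⟨ha0, hbc⟩ := h0
      rw [Int.natCast_eq_zero, Int.gcd_eq_zero_iff] at hbc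
      obtain ⟨hb0, hc0⟩ := hbc
      have hc0' : c = 0 := by
        rcases mul_eq_zero.mp hc0 with h | h
        · exact absurd h hpne
        · exact h
      apply hD2
      rw [← hdisc, hb0, ha', ha0]
      simp
    obtain ⟨q, hq, hqd⟩ := Nat.exists_prime_and_dvd hg
    have hqa' : (q : ℤ) ∣ a' := dvd_trans (Int.natCast_dvd_natCast.mpr hqd) (Int.gcd_dvd_left _ _)
    have hqb : (q : ℤ) ∣ b := dvd_trans (Int.natCast_dvd_natCast.mpr hqd)
      (dvd_trans (Int.gcd_dvd_right _ _) (Int.gcd_dvd_left _ _))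
    have hqpc : (q : ℤ) ∣ (p : ℤ) * c := dvd_trans (Int.natCast_dvd_natCast.mpr hqd)
      (dvd_trans (Int.gcd_dvd_right _ _) (Int.gcd_dvd_right _ _))
    have hqZ : Prime (q : ℤ) := (Nat.prime_iff_prime_int.mp hq)
    by_cases hqp : q = p
    · subst hqp
      apply hp2a
      rw [ha', pow_two]
      exact mul_dvd_mul_left _ hqa'
    · have hqc : (q : ℤ) ∣ c := by
        rcases hqZ.dvd_mul.mp hqpc with h | h
        · exact absurd ((Nat.prime_dvd_prime_iff_eq hq hp).mp
            (Int.natCast_dvd_natCast.mp h)) hqp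
        · exact h
      have hqall : (q : ℤ) ∣ (Int.gcd a (Int.gcd b c) : ℤ) := by
        refine Int.dvd_coe_gcd ?_ (Int.dvd_coe_gcd hqb hqc)
        rw [ha']; exact Dvd.dvd.mul_left hqa' _
      rw [hprim] at hqall
      exact hqZ.not_dvd_one (by simpa using hqall)
  · -- discriminant
    simp only [pushp, hdiv]
    rw [← hdisc, ha']
    ring
end

section
/- (injectivity in Lemma 3.6 (iv)) Let p > 5 be a prime and D an integer with D ≡ 0 (mod p) and D ≢ 0 (mod p²). If [a,b,c] and [a',b',c'] are forms in L_p(D) such that [a/p, b, pc] and [a'/p, b', pc'] are SL₂(ℤ)-equivalent, then [a,b,c] and [a',b',c'] are Γ₀(p)-equivalent. -/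
open Matrix Finset

/-- injectivity in Lemma 3.6 (iv): if `p ∣ D`, `p² ∤ D` and
`[a/p, b, pc]`, `[a'/p, b', pc']` are `SL₂(ℤ)`-equivalent for forms
`[a,b,c], [a',b',c'] ∈ L_p(D)`, then `[a,b,c]` and `[a',b',c']` are
`Γ₀(p)`-equivalent. -/
theorem statement7 (p : ℕ) (hp : Nat.Prime p) (hp5 : 5 < p) (D : ℤ)
    (hD : (p : ℤ) ∣ D) (hD2 : ¬ (p : ℤ) ^ 2 ∣ D) :
    ∀ Q ∈ Lp p D, ∀ Q' ∈ Lp p D,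
      relSL (pushp p Q) (pushp p Q') → relG0 p Q Q' := by
  rintro ⟨a, b, c⟩ ⟨⟨hprim, hdisc⟩, hpa⟩ ⟨a', b', c'⟩ ⟨⟨hprim', hdisc'⟩, hpa'⟩ ⟨M, hM⟩
  have hpz : Prime (p : ℤ) := Nat.prime_iff_prime_int.mp hp
  have hp0 : (p : ℤ) ≠ 0 := by exact_mod_cast hp.ne_zero
  obtain ⟨a₁, rfl⟩ := hpa
  obtain ⟨a₁', rfl⟩ := hpa'
  simp only [pushp, Int.mul_ediv_cancel_left _ hp0] at hM
  set α := M.1 0 0 with hα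
  set β := M.1 0 1 with hβ
  set γ := M.1 1 0 with hγ
  set δ := M.1 1 1 with hδ
  have hdet : α * δ - β * γ = 1 := by
    have := M.2
    rw [Matrix.det_fin_two] at this
    linarith
  simp only [actForm, Prod.mk.injEq] at hM
  obtain ⟨E1, E2, E3⟩ := hM
  simp only [← hα, ← hβ, ← hγ, ← hδ] at E1 E2 E3
  simp only at hdisc hdisc' hprim hprim' E1 E2 E3
  -- p ∣ b and p ∣ b'
  have hpb : (p : ℤ) ∣ b := by
    have : (p : ℤ) ∣ b ^ 2 := by
      have : b ^ 2 = D + 4 * (p * a₁) * c := by linarith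
      rw [this]; exact dvd_add hD ⟨4 * a₁ * c, by ring⟩
    exact hpz.dvd_of_dvd_pow this
  have hpb' : (p : ℤ) ∣ b' := by
    have : (p : ℤ) ∣ b' ^ 2 := by
      have : b' ^ 2 = D + 4 * (p * a₁') * c' := by linarith
      rw [this]; exact dvd_add hD ⟨4 * a₁' * c', by ring⟩
    exact hpz.dvd_of_dvd_pow this
  obtain ⟨b₁, rfl⟩ := hpb
  obtain ⟨b₁', rfl⟩ := hpb'
  -- p ∤ a₁ and p ∤ a₁'
  have hpa1 : ¬ (p : ℤ) ∣ a₁ := by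
    intro ⟨k, hk⟩
    apply hD2
    refine ⟨b₁ ^ 2 - 4 * k * c, ?_⟩
    subst hk; linarith [hdisc]
  have hpa1' : ¬ (p : ℤ) ∣ a₁' := by
    intro ⟨k, hk⟩
    apply hD2
    refine ⟨b₁' ^ 2 - 4 * k * c', ?_⟩
    subst hk; linarith [hdisc']
  -- p ∤ α
  have hpα : ¬ (p : ℤ) ∣ α := by
    intro ⟨k, hk⟩
    apply hpa1'
    have : a₁' = p * (k * (a₁ * (p * k) + p * b₁ * γ) + c * γ ^ 2) := by
      linear_combination -E1 + (a₁ * (α + p * k) + p * b₁ * γ) * hk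
    exact ⟨_, this⟩
  -- p ∣ β
  have hpβ : (p : ℤ) ∣ β := by
    have h2 : (p : ℤ) ∣ 2 * a₁ * α * β := by
      refine ⟨b₁' - b₁ * (α * δ + β * γ) - 2 * c * γ * δ, ?_⟩
      linarith [E2]
    rcases (hpz.dvd_mul.mp h2) with h | h
    · rcases (hpz.dvd_mul.mp h) with h | h
      · rcases (hpz.dvd_mul.mp h) with h | h
        · exact absurd (Int.le_of_dvd (by norm_num) h) (by omega)
        · exact absurd h hpa1
      · exact absurd h hpα
    · exact h
  obtain ⟨β₁, hβ₁⟩ := hpβ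
  -- construct the Γ₀(p) matrix
  refine ⟨⟨!![α, β₁; p * γ, δ], ?_⟩, ⟨γ, rfl⟩, ?_⟩
  · rw [Matrix.det_fin_two_of]
    have : α * δ - β₁ * ((p : ℤ) * γ) = α * δ - β * γ := by rw [hβ₁]; ring
    rw [this, hdet]
  · have hC3 : (p : ℤ) * ((p * a₁) * β₁ ^ 2 + p * b₁ * β₁ * δ + c * δ ^ 2) = p * c' := by
      linear_combination E3 - (a₁ * (β + p * β₁) + p * b₁ * δ) * hβ₁
    have C3 := mul_left_cancel₀ hp0 hC3
    simp only [actForm, Matrix.SpecialLinearGroup.coe_mk, Matrix.of_apply,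
      Matrix.cons_val', Matrix.cons_val_zero, Matrix.cons_val_one, Matrix.head_cons,
      Matrix.empty_val', Matrix.cons_val_fin_one, Matrix.head_fin_const,
      Prod.mk.injEq]
    refine ⟨?_, ?_, ?_⟩
    · linear_combination (p : ℤ) * E1
    · linear_combination E2 - (2 * a₁ * α + p * b₁ * γ) * hβ₁
    · linear_combination C3
end

section
/- For every prime p, every integer χ, and all natural numbers m, f with m ≤ f, the identity G_χ(m+2, f+2) − (p²X + p³X²)·G_χ(m+1, f+1) + p⁵X³·G_χ(m, f) = 1 − χ·p·X holds in the polynomial ring ℤ[X]. (This is the identity F_p(p²T; X) − (p²X + p³X²)·F_p(pT; X) + p⁵X³·F_p(T; X) = 1 − (𝔡_T/p)·pX, used in the proof of Theorem 4.1 in the case n = 1, expressed via Kaufhold's explicit formula for F_p.) -/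
/-- Kaufhold's explicit polynomial
`G_χ(m, f) = ∑_{i=0}^{m} (p²X)^i ( ∑_{j=0}^{f−i} (p³X²)^j − χ·pX·∑_{j=0}^{f−i−1} (p³X²)^j )`
in `ℤ[X]`. -/
noncomputable def Gpoly (p : ℕ) (χ : ℤ) (m f : ℕ) : Polynomial ℤ :=
  ∑ i ∈ Finset.range (m + 1),
    ((p : Polynomial ℤ) ^ 2 * Polynomial.X) ^ i *
      ((∑ j ∈ Finset.range (f - i + 1), ((p : Polynomial ℤ) ^ 3 * Polynomial.X ^ 2) ^ j) -
        (χ : Polynomial ℤ) * (p : Polynomial ℤ) * Polynomial.X *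
          ∑ j ∈ Finset.range (f - i), ((p : Polynomial ℤ) ^ 3 * Polynomial.X ^ 2) ^ j)

lemma Gpoly_shift (p : ℕ) (χ : ℤ) (m f : ℕ) :
    Gpoly p χ (m + 1) (f + 1) =
      ((∑ j ∈ Finset.range (f + 2), ((p : Polynomial ℤ) ^ 3 * Polynomial.X ^ 2) ^ j) -
        (χ : Polynomial ℤ) * (p : Polynomial ℤ) * Polynomial.X *
          ∑ j ∈ Finset.range (f + 1), ((p : Polynomial ℤ) ^ 3 * Polynomial.X ^ 2) ^ j) +
      ((p : Polynomial ℤ) ^ 2 * Polynomial.X) * Gpoly p χ m f := by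
  unfold Gpoly
  rw [Finset.sum_range_succ']
  simp only [Nat.succ_sub_succ_eq_sub, Nat.sub_zero, pow_zero, one_mul, pow_succ']
  rw [add_comm]
  congr 1
  conv_rhs => rw [Finset.mul_sum]
  exact Finset.sum_congr rfl fun i _ => by ring

/-- the identity
`F_p(p²T; X) − (p²X + p³X²)·F_p(pT; X) + p⁵X³·F_p(T; X) = 1 − (𝔡_T/p)·pX`,
expressed via Kaufhold's formula. -/
theorem statement10 (p : ℕ) (hp : Nat.Prime p) (χ : ℤ) (m f : ℕ) (hmf : m ≤ f) :
    Gpoly p χ (m + 2) (f + 2) -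
        ((p : Polynomial ℤ) ^ 2 * Polynomial.X + (p : Polynomial ℤ) ^ 3 * Polynomial.X ^ 2) *
          Gpoly p χ (m + 1) (f + 1) +
        (p : Polynomial ℤ) ^ 5 * Polynomial.X ^ 3 * Gpoly p χ m f =
      1 - (χ : Polynomial ℤ) * (p : Polynomial ℤ) * Polynomial.X := by
  rw [show m + 2 = (m + 1) + 1 from rfl, show f + 2 = (f + 1) + 1 from rfl,
    Gpoly_shift p χ (m + 1) (f + 1), Gpoly_shift p χ m f,
    geom_sum_succ (x := (p : Polynomial ℤ) ^ 3 * Polynomial.X ^ 2) (n := f + 2),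
    geom_sum_succ (x := (p : Polynomial ℤ) ^ 3 * Polynomial.X ^ 2) (n := f + 1)]
  ring
end
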